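/- Let R be a noetherian regular ring of prime characteristic p, M_∞ an F-finite F-module, and f1,…,fc ∈ R. Then Supp(M_∞/(f1,…,fc)M_∞) is Zariski-closed; explicitly, given a presentation coker(A) with structure map U generating M_∞, Supp(M_∞/(f1,…,fc)M_∞) = Supp( R^a / ((im(f1,…,fc) + im(A^{[p^{j+1}]})) :_{R^a} (U^{[p^j]}⋯U)) ) for j sufficiently large. -/

import Mathlib

open CategoryTheory IsLocalRing

open scoped Pointwise

/-- A noetherian local ring is regular if its Krull dimension equals the dimension of its
cotangent space over the residue field. -/
def IsRegularLocalRingStmt (A : Type u) [CommRing A] [IsLocalRing A] : Prop :=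
  ringKrullDim A = (Module.finrank (ResidueField A) (CotangentSpace A) : WithBot (WithTop ℕ))

/-- A commutative ring is regular if it is noetherian and all of its localizations at
primes are regular local rings. -/
def IsRegularRingStmt (R : Type u) [CommRing R] : Prop :=
  IsNoetherianRing R ∧
    ∀ (P : Ideal R) [P.IsPrime], IsRegularLocalRingStmt (Localization.AtPrime P)

/-- The product `U^{[p^j]} ⋯ U^{[p]} U` of Frobenius twists of the structure matrix. -/
def Uprod {R : Type} [CommRing R] {a : ℕ} (p : ℕ) (U : Matrix (Fin a) (Fin a) R) :
    ℕ → Matrix (Fin a) (Fin a) R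
  | 0 => U
  | j + 1 => (U.map (· ^ (p ^ (j + 1)))) * Uprod p U j

/-- The transition map `coker A^{[p^e]} →U^{[p^e]}→ coker A^{[p^{e+1}]}`. -/
noncomputable def cokTrans {R : Type} [CommRing R] {a b : ℕ} (p : ℕ)
    (A : Matrix (Fin a) (Fin b) R) (U : Matrix (Fin a) (Fin a) R)
    (hU : ∀ (e : ℕ) (v : Fin b → R), ∃ w : Fin b → R,
      (U.map (· ^ (p ^ e))).mulVecLin ((A.map (· ^ (p ^ e))).mulVecLin v) =
        (A.map (· ^ (p ^ (e + 1)))).mulVecLin w) (e : ℕ) :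
    ModuleCat.of R ((Fin a → R) ⧸ LinearMap.range ((A.map (· ^ (p ^ e))).mulVecLin)) ⟶
      ModuleCat.of R
        ((Fin a → R) ⧸ LinearMap.range ((A.map (· ^ (p ^ (e + 1)))).mulVecLin)) :=
  ModuleCat.ofHom (Submodule.mapQ _ _ ((U.map (· ^ (p ^ e))).mulVecLin) (by
    rintro x ⟨v, rfl⟩
    obtain ⟨w, hw⟩ := hU e v
    exact ⟨w, hw.symm⟩))

section AuxLemmas

variable {R : Type} [CommRing R]

/-- Membership in the submodule `(f1,…,fc)M`. -/
lemma mem_iSup_smul_top {M : Type*} [AddCommGroup M] [Module R M] {c : ℕ} (f : Fin c → R)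
    (x : M) :
    x ∈ (⨆ i : Fin c, f i • (⊤ : Submodule R M)) ↔ ∃ g : Fin c → M, x = ∑ i, f i • g i := by
  constructor
  · intro hx
    let S : Submodule R M :=
      { carrier := {x | ∃ g : Fin c → M, x = ∑ i, f i • g i}
        add_mem' := by
          rintro x y ⟨g, rfl⟩ ⟨h, rfl⟩
          exact ⟨g + h, by simp [smul_add, Finset.sum_add_distrib]⟩
        zero_mem' := ⟨0, by simp⟩
        smul_mem' := by
          rintro r x ⟨g, rfl⟩
          exact ⟨r • g, by
            rw [Finset.smul_sum]
            exact Finset.sum_congr rfl fun i _ => by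
              rw [Pi.smul_apply, smul_comm]⟩ }
    have hle : (⨆ i : Fin c, f i • (⊤ : Submodule R M)) ≤ S := by
      refine iSup_le fun i x hx => ?_
      have hx' : x ∈ f i • ((⊤ : Submodule R M) : Set M) := by
        rwa [← Submodule.coe_pointwise_smul]
      obtain ⟨m, -, rfl⟩ := Set.mem_smul_set.mp hx'
      refine ⟨Pi.single i m, ?_⟩
      rw [Finset.sum_eq_single i (fun j _ hj => by rw [Pi.single_eq_of_ne hj, smul_zero])
        (fun h => absurd (Finset.mem_univ i) h)]
      rw [Pi.single_eq_same]
    exact hle hx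
  · rintro ⟨g, rfl⟩
    exact Submodule.sum_mem _ fun i _ => Submodule.mem_iSup_of_mem i
      (Submodule.smul_mem_pointwise_smul _ _ _ trivial)


lemma mk_sum_smul {M : Type*} [AddCommGroup M] [Module R M] (S : Submodule R M) {c : ℕ}
    (f : Fin c → R) (g : Fin c → M) :
    (Submodule.Quotient.mk (∑ i, f i • g i) : M ⧸ S) =
      ∑ i, f i • Submodule.Quotient.mk (g i) := by
  rw [← Submodule.mkQ_apply, map_sum]
  exact Finset.sum_congr rfl fun i _ => by rw [map_smul, Submodule.mkQ_apply]

variable (p : ℕ) [Fact p.Prime] [CharP R p]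

/-- Entrywise Frobenius of a sum. -/
lemma frob_sum {ι : Type*} [Fintype ι] (e : ℕ) (g : ι → R) :
    (∑ l, g l) ^ (p ^ e) = ∑ l, (g l) ^ (p ^ e) := by
  have hfr : ∀ x : R, x ^ (p ^ e) = iterateFrobenius R p e x := fun _ => rfl
  rw [hfr, map_sum]
  exact Finset.sum_congr rfl fun l _ => (hfr _).symm

/-- Entrywise Frobenius moves across matrix-vector multiplication. -/
lemma frob_smul_mulVecLin {n m : ℕ} (e : ℕ) (X : Matrix (Fin n) (Fin m) R) (r : R)
    (v : Fin m → R) :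
    (fun k => ((r • X.mulVecLin v) k) ^ (p ^ e)) =
      (r ^ (p ^ e)) • (X.map (· ^ (p ^ e))).mulVecLin (fun l => (v l) ^ (p ^ e)) := by
  funext k
  simp only [Pi.smul_apply, smul_eq_mul, mul_pow, Matrix.mulVecLin_apply, Matrix.mulVec,
    dotProduct, Matrix.map_apply]
  congr 1
  rw [frob_sum p e]
  exact Finset.sum_congr rfl fun l _ => mul_pow _ _ _

/-- The key Frobenius-pushing lemma: if `z ∈ (f1,…,fc)R^a + im A^{[p^t]}`, then the entrywise
`p^e`-th power of `z` lies in `(f1,…,fc)R^a + im A^{[p^{t+e}]}`. -/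
lemma frob_push {a b c : ℕ} (A : Matrix (Fin a) (Fin b) R) (f : Fin c → R) (e t : ℕ)
    (z : Fin a → R)
    (hz : z ∈ (⨆ i : Fin c, f i • (⊤ : Submodule R (Fin a → R))) ⊔
      LinearMap.range ((A.map (· ^ (p ^ t))).mulVecLin)) :
    (fun k => (z k) ^ (p ^ e)) ∈
      (⨆ i : Fin c, f i • (⊤ : Submodule R (Fin a → R))) ⊔
        LinearMap.range ((A.map (· ^ (p ^ (t + e)))).mulVecLin) := by
  obtain ⟨g, hg, bb, hb, rfl⟩ := Submodule.mem_sup.mp hz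
  obtain ⟨w, rfl⟩ := hb
  obtain ⟨gg, rfl⟩ := (mem_iSup_smul_top f g).mp hg
  have hq : p ^ e - 1 + 1 = p ^ e := Nat.succ_pred_eq_of_pos (pow_pos (Fact.out : p.Prime).pos e)
  refine Submodule.mem_sup.mpr
    ⟨∑ i, f i • (fun k => f i ^ (p ^ e - 1) * (gg i k) ^ (p ^ e)), ?_,
     (A.map (· ^ (p ^ (t + e)))).mulVecLin (fun l => (w l) ^ (p ^ e)), ⟨_, rfl⟩, ?_⟩
  · exact (mem_iSup_smul_top f _).mpr ⟨_, rfl⟩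
  · funext k
    simp only [Pi.add_apply, Finset.sum_apply, Pi.smul_apply, smul_eq_mul,
      Matrix.mulVecLin_apply, Matrix.mulVec, dotProduct, Matrix.map_apply]
    have hfr : ∀ x : R, x ^ (p ^ e) = iterateFrobenius R p e x := fun _ => rfl
    rw [hfr, map_add, map_sum]
    simp only [map_mul, iterateFrobenius_def]
    congr 1
    · exact Finset.sum_congr rfl fun i _ => by rw [← mul_assoc, ← pow_succ', hq]
    · rw [hfr, map_sum]
      exact Finset.sum_congr rfl fun l _ => by
        rw [map_mul, iterateFrobenius_def, iterateFrobenius_def, ← pow_mul, ← pow_add]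

omit [Fact p.Prime] [CharP R p] in
lemma matrix_map_pow_zero {n m : ℕ} (X : Matrix (Fin n) (Fin m) R) :
    X.map (· ^ (p ^ 0)) = X := by
  ext k l; simp [Matrix.map_apply]

/-- Bracket powers of the `Uprod` products. -/
lemma Uprod_map_pow {a : ℕ} (U : Matrix (Fin a) (Fin a) R) (e j : ℕ) :
    (Uprod p U (j + 1)).map (· ^ (p ^ e)) =
      (U.map (· ^ (p ^ (e + (j + 1))))) * ((Uprod p U j).map (· ^ (p ^ e))) := by
  show ((U.map (· ^ (p ^ (j + 1)))) * Uprod p U j).map (· ^ (p ^ e)) = _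
  have hco : ((· ^ (p ^ e)) : R → R) = ⇑(iterateFrobenius R p e) := rfl
  rw [hco, Matrix.map_mul]
  congr 1
  rw [Matrix.map_map]
  ext k l
  simp only [Matrix.map_apply, Function.comp_apply, iterateFrobenius_def, ← pow_mul]
  rw [← pow_add]
  ring_nf

variable {a b : ℕ} (A : Matrix (Fin a) (Fin b) R) (U : Matrix (Fin a) (Fin a) R)
    (hU : ∀ (e : ℕ) (v : Fin b → R), ∃ w : Fin b → R,
      (U.map (· ^ (p ^ e))).mulVecLin ((A.map (· ^ (p ^ e))).mulVecLin v) =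
        (A.map (· ^ (p ^ (e + 1)))).mulVecLin w)

/-- The composite transition map from stage `e` to stage `e + (j + 1)` is induced by the
bracket power `(U^{[p^j]} ⋯ U)^{[p^e]}`. -/
lemma ofSequence_cokTrans_apply (e j e' : ℕ) (he : e' = e + (j + 1)) (h : e ⟶ e')
    (v : Fin a → R) :
    (Functor.ofSequence (cokTrans p A U hU)).map h
        (Submodule.Quotient.mk v :
          (Fin a → R) ⧸ LinearMap.range ((A.map (· ^ (p ^ e))).mulVecLin)) =
      (Submodule.Quotient.mk ((((Uprod p U j).map (· ^ (p ^ e))).mulVecLin) v) :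
        (Fin a → R) ⧸ LinearMap.range ((A.map (· ^ (p ^ e'))).mulVecLin)) := by
  subst he
  induction j with
  | zero =>
      have heq : h = homOfLE (Nat.le_add_right e 1) := Subsingleton.elim _ _
      rw [heq, Functor.ofSequence_map_homOfLE_succ]
      rfl
  | succ j ih =>
      have heq : h = homOfLE (by omega : e ≤ e + (j + 1)) ≫
          homOfLE (by omega : e + (j + 1) ≤ e + (j + 1) + 1) := Subsingleton.elim _ _
      rw [heq, Functor.map_comp]; erw [ModuleCat.comp_apply, ih (homOfLE _)]
      have h2 : (Functor.ofSequence (cokTrans p A U hU)).map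
          (homOfLE (Nat.le_add_right (e + (j + 1)) 1)) = cokTrans p A U hU (e + (j + 1)) :=
        Functor.ofSequence_map_homOfLE_succ _ _
      rw [show (homOfLE (by omega : e + (j + 1) ≤ e + (j + 1) + 1)) =
          homOfLE (Nat.le_add_right (e + (j + 1)) 1) from rfl, h2]
      show (cokTrans p A U hU (e + (j + 1))) _ = _
      show Submodule.Quotient.mk _ = _
      rw [Uprod_map_pow, Matrix.mulVecLin_mul]
      rfl

end AuxLemmas

/-- For an `F`-finite `F`-module `M_∞ = colim (coker A →U→ coker A^{[p]} →U^{[p]}→ ⋯)` over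
a noetherian regular ring of prime characteristic `p`, the support of
`M_∞/(f1,…,fc)M_∞` is Zariski-closed, and for `j` sufficiently large it equals
`Supp (R^a / ((im(f1,…,fc) + im A^{[p^{j+1}]}) :_{R^a} (U^{[p^j]} ⋯ U)))`. -/
theorem stmt_6 {R : Type} [CommRing R] (p : ℕ) [Fact p.Prime] [CharP R p]
    (hreg : IsRegularRingStmt R)
    (a b : ℕ) (A : Matrix (Fin a) (Fin b) R) (U : Matrix (Fin a) (Fin a) R)
    (hU : ∀ (e : ℕ) (v : Fin b → R), ∃ w : Fin b → R,
      (U.map (· ^ (p ^ e))).mulVecLin ((A.map (· ^ (p ^ e))).mulVecLin v) =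
        (A.map (· ^ (p ^ (e + 1)))).mulVecLin w)
    (c : ℕ) (f : Fin c → R) :
    IsClosed (Module.support R
      (↥(Limits.colimit (Functor.ofSequence (cokTrans p A U hU))) ⧸
        (⨆ i : Fin c, f i • (⊤ : Submodule R
          ↥(Limits.colimit (Functor.ofSequence (cokTrans p A U hU))))))) ∧
    ∃ j0 : ℕ, ∀ j, j0 ≤ j →
      Module.support R
        (↥(Limits.colimit (Functor.ofSequence (cokTrans p A U hU))) ⧸
          (⨆ i : Fin c, f i • (⊤ : Submodule R
            ↥(Limits.colimit (Functor.ofSequence (cokTrans p A U hU)))))) =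
      Module.support R
        ((Fin a → R) ⧸
          Submodule.comap (Uprod p U j).mulVecLin
            ((⨆ i : Fin c, f i • (⊤ : Submodule R (Fin a → R))) ⊔
              LinearMap.range ((A.map (· ^ (p ^ (j + 1)))).mulVecLin))) := by
  classical
  haveI : IsNoetherianRing R := hreg.1
  set F := Functor.ofSequence (cokTrans p A U hU) with hF
  set B : ℕ → Submodule R (Fin a → R) :=
    fun t => LinearMap.range ((A.map (· ^ (p ^ t))).mulVecLin) with hB
  set G : Submodule R (Fin a → R) := ⨆ i : Fin c, f i • ⊤ with hG
  set K : ℕ → Submodule R (Fin a → R) :=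
    fun j => Submodule.comap (Uprod p U j).mulVecLin (G ⊔ B (j + 1)) with hK
  -- the chain `K` is monotone
  have Kstep : ∀ j, K j ≤ K (j + 1) := by
    intro j x hx
    have hx' : (Uprod p U j).mulVecLin x ∈ G ⊔ B (j + 1) := hx
    obtain ⟨g, hg, bb, hbb, hsum⟩ := Submodule.mem_sup.mp hx'
    obtain ⟨w, hw⟩ := hbb
    obtain ⟨gg, rfl⟩ := (mem_iSup_smul_top f g).mp hg
    show (Uprod p U (j + 1)).mulVecLin x ∈ G ⊔ B (j + 2)
    have : (Uprod p U (j + 1)).mulVecLin x =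
        (U.map (· ^ (p ^ (j + 1)))).mulVecLin ((Uprod p U j).mulVecLin x) := by
      show ((U.map (· ^ (p ^ (j + 1)))) * Uprod p U j).mulVecLin x = _
      rw [Matrix.mulVecLin_mul]; rfl
    rw [this, ← hsum, ← hw, map_add]
    obtain ⟨w', hw'⟩ := hU (j + 1) w
    refine Submodule.add_mem _ (Submodule.mem_sup_left ?_) (Submodule.mem_sup_right ?_)
    · rw [map_sum]
      refine Submodule.sum_mem _ fun i _ => ?_
      rw [map_smul]
      exact Submodule.mem_iSup_of_mem i (Submodule.smul_mem_pointwise_smul _ _ _ trivial)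
    · rw [hw']
      exact ⟨w', rfl⟩
  have Kmono : Monotone K := monotone_nat_of_le_succ Kstep
  -- the chain stabilizes
  obtain ⟨j0, hj0⟩ := monotone_stabilizes_iff_noetherian.mpr inferInstance ⟨K, Kmono⟩
  -- the central claim
  have key : ∀ P : PrimeSpectrum R,
      (∀ m : (↥(Limits.colimit F) ⧸
          (⨆ i : Fin c, f i • (⊤ : Submodule R ↥(Limits.colimit F)))),
        ∃ r ∉ P.asIdeal, r • m = 0) ↔
      (∀ x : ((Fin a → R) ⧸ K j0), ∃ r ∉ P.asIdeal, r • x = 0) := by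
    intro P
    constructor
    · -- colimit side vanishes ⇒ finite side vanishes
      intro h x
      obtain ⟨v, rfl⟩ := Submodule.Quotient.mk_surjective _ x
      obtain ⟨s, hsP, hs0⟩ := h (Submodule.Quotient.mk (Limits.colimit.ι F 0
        (Submodule.Quotient.mk v)))
      refine ⟨s, hsP, ?_⟩
      rw [← Submodule.Quotient.mk_smul, Submodule.Quotient.mk_eq_zero]
      -- `s • v ∈ K k` for some `k`
      rw [← Submodule.Quotient.mk_smul, Submodule.Quotient.mk_eq_zero] at hs0
      obtain ⟨g, hgeq⟩ := (mem_iSup_smul_top f _).mp hs0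
      choose t y hy using fun i => Limits.Concrete.colimit_exists_rep F (g i)
      set T := Finset.univ.sup t with hT
      have hgT : ∀ i, g i = Limits.colimit.ι F T
          (F.map (homOfLE (Finset.le_sup (Finset.mem_univ i)) : t i ⟶ T) (y i)) := by
        intro i
        rw [← hy i]
        have := Limits.colimit.w F (homOfLE (Finset.le_sup (Finset.mem_univ i)) : t i ⟶ T)
        rw [← this]
        rfl
      have heq : Limits.colimit.ι F 0 (Submodule.Quotient.mk (s • v)) =
          Limits.colimit.ι F T (∑ i, f i •
            F.map (homOfLE (Finset.le_sup (Finset.mem_univ i)) : t i ⟶ T) (y i)) := by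
        have h1' : Limits.colimit.ι F T (∑ i, f i •
            F.map (homOfLE (Finset.le_sup (Finset.mem_univ i)) : t i ⟶ T) (y i)) =
            ∑ i, f i • g i := by
          rw [map_sum]
          exact Finset.sum_congr rfl fun i _ => by rw [map_smul, ← hgT i]
        rw [h1', ← hgeq, Submodule.Quotient.mk_smul]; exact map_smul _ _ _
      obtain ⟨k, fk, gk, hfg⟩ := Limits.Concrete.colimit_exists_of_rep_eq F _ _ heq
      have hfg' : (F.map fk) ((Submodule.Quotient.mk (s • v)) : (Fin a → R) ⧸ B 0) =
          (F.map gk)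
            (∑ i, f i • F.map (homOfLE (Finset.le_sup (Finset.mem_univ i)) : t i ⟶ T) (y i)) :=
        hfg
      have hfg2 : F.map (fk ≫ homOfLE (Nat.le_succ k)) (Submodule.Quotient.mk (s • v)) =
          F.map (gk ≫ homOfLE (Nat.le_succ k))
            (∑ i, f i • F.map (homOfLE (Finset.le_sup (Finset.mem_univ i)) : t i ⟶ T) (y i)) := by
        rw [F.map_comp, F.map_comp, ModuleCat.comp_apply]
        erw [ModuleCat.comp_apply, hfg']
      rw [ofSequence_cokTrans_apply p A U hU 0 k (k + 1) (by omega) _ (s • v)] at hfg2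
      rw [matrix_map_pow_zero] at hfg2
      -- decompose the right-hand side
      have hrep : ∀ i : Fin c, ∃ gi : Fin a → R, Submodule.Quotient.mk gi =
          F.map (gk ≫ homOfLE (Nat.le_succ k))
            (F.map (homOfLE (Finset.le_sup (Finset.mem_univ i)) : t i ⟶ T) (y i)) :=
        fun i => Submodule.Quotient.mk_surjective _ _
      choose gg hgg using hrep
      rw [map_sum] at hfg2
      have hfg3 : (Submodule.Quotient.mk ((Uprod p U k).mulVecLin (s • v)) :
          (Fin a → R) ⧸ B (k + 1)) = Submodule.Quotient.mk (∑ i, f i • gg i) := by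
        rw [hfg2, mk_sum_smul]
        refine Finset.sum_congr rfl fun i _ => ?_
        rw [map_smul, hgg i]; rfl
      have hd : (Uprod p U k).mulVecLin (s • v) - ∑ i, f i • gg i ∈ B (k + 1) :=
        (Submodule.Quotient.eq _).mp hfg3
      have hskv : s • v ∈ K k := by
        show (Uprod p U k).mulVecLin (s • v) ∈ G ⊔ B (k + 1)
        have : (Uprod p U k).mulVecLin (s • v) =
            (∑ i, f i • gg i) + ((Uprod p U k).mulVecLin (s • v) - ∑ i, f i • gg i) := by ring
        rw [this]
        exact Submodule.add_mem _
          (Submodule.mem_sup_left ((mem_iSup_smul_top f _).mpr ⟨gg, rfl⟩))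
          (Submodule.mem_sup_right hd)
      rcases le_total k j0 with hk | hk
      · exact Kmono hk hskv
      · have hKeq : K j0 = K k := hj0 k hk
        rwa [← hKeq] at hskv
    · -- finite side vanishes ⇒ colimit side vanishes
      intro h m
      obtain ⟨m', rfl⟩ := Submodule.Quotient.mk_surjective _ m
      obtain ⟨e, x, hx⟩ := Limits.Concrete.colimit_exists_rep F m'
      obtain ⟨v, rfl⟩ := Submodule.Quotient.mk_surjective (B e) x
      have hx2 : (Limits.colimit.ι F e)
          ((Submodule.Quotient.mk v) : (Fin a → R) ⧸ B e) = m' := hx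
      rw [← hx2]
      -- kill the basis vectors
      have hsk : ∀ k : Fin a, ∃ r, r ∉ P.asIdeal ∧
          r • ((Submodule.Quotient.mk (Pi.single k 1)) : (Fin a → R) ⧸ K j0) = 0 := by
        intro k
        obtain ⟨r, hr, hr0⟩ := h (Submodule.Quotient.mk (Pi.single k 1))
        exact ⟨r, hr, hr0⟩
      choose s hs1 hs2 using hsk
      have hmem : ∀ k : Fin a, (s k • (Uprod p U j0).mulVecLin (Pi.single k (1 : R))) ∈
          G ⊔ B (j0 + 1) := by
        intro k
        have := hs2 k
        rw [← Submodule.Quotient.mk_smul, Submodule.Quotient.mk_eq_zero] at this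
        have h2 : (Uprod p U j0).mulVecLin
            ((s k • (Pi.single k 1 : Fin a → R) : Fin a → R)) ∈ G ⊔ B (j0 + 1) := this
        rwa [map_smul] at h2
      -- push each by Frobenius
      have h1 : ∀ k : Fin a, (s k ^ (p ^ e)) •
          ((Uprod p U j0).map (· ^ (p ^ e))).mulVecLin ((Pi.single k 1 : Fin a → R)) ∈
          G ⊔ B (e + (j0 + 1)) := by
        intro k
        have hpush := frob_push p A f e (j0 + 1) _ (hmem k)
        have hsingle : (fun l => (Pi.single k (1 : R) l) ^ (p ^ e)) = Pi.single k (1 : R) := by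
          funext l
          rcases eq_or_ne l k with rfl | hlk
          · rw [Pi.single_eq_same, one_pow]
          · rw [Pi.single_eq_of_ne hlk, zero_pow (pow_ne_zero e (Fact.out : p.Prime).ne_zero)]
        rw [frob_smul_mulVecLin, hsingle] at hpush
        have hidx : (j0 + 1) + e = e + (j0 + 1) := by omega
        rwa [hidx] at hpush
      -- combine over a general vector
      set q := p ^ e with hqdef
      set s' := (∏ k, s k) ^ q with hs'def
      have hs'P : s' ∉ P.asIdeal := by
        intro hmem'
        have hprod : (∏ k, s k) ∈ P.asIdeal := P.isPrime.mem_of_pow_mem _ hmem'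
        obtain ⟨k, -, hk⟩ := (Ideal.IsPrime.prod_mem_iff).mp hprod
        exact hs1 k hk
      have hv : v = ∑ k, v k • (Pi.single k 1 : Fin a → R) := by
        funext l
        simp [Finset.sum_apply, Pi.single_apply]
      have hsv : s' • ((Uprod p U j0).map (· ^ q)).mulVecLin v ∈ G ⊔ B (e + (j0 + 1)) := by
        have hexp : s' • ((Uprod p U j0).map (· ^ q)).mulVecLin v =
            ∑ k, (v k * ∏ l ∈ Finset.univ.erase k, s l ^ q) •
              (s k ^ q • ((Uprod p U j0).map (· ^ q)).mulVecLin
                ((Pi.single k 1 : Fin a → R))) := by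
          conv_lhs => rw [hv]
          rw [map_sum, Finset.smul_sum]
          refine Finset.sum_congr rfl fun k _ => ?_
          rw [map_smul, smul_smul, smul_smul]
          congr 1
          rw [hs'def, ← Finset.prod_pow,
            ← Finset.mul_prod_erase Finset.univ (fun l => s l ^ q) (Finset.mem_univ k)]
          ring
        rw [hexp]
        exact Submodule.sum_mem _ fun k _ => Submodule.smul_mem _ _ (h1 k)
      -- conclude
      obtain ⟨g, hg, bb, hbb, hsum⟩ := Submodule.mem_sup.mp hsv
      obtain ⟨gg2, rfl⟩ := (mem_iSup_smul_top f g).mp hg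
      refine ⟨s', hs'P, ?_⟩
      rw [← Submodule.Quotient.mk_smul, Submodule.Quotient.mk_eq_zero]
      have hmap : Limits.colimit.ι F e
          (Submodule.Quotient.mk (s' • v) : (Fin a → R) ⧸ B e) =
          Limits.colimit.ι F (e + (j0 + 1))
            ((F.map (homOfLE (by omega) : e ⟶ e + (j0 + 1)))
              (Submodule.Quotient.mk (s' • v))) := by
        rw [← Limits.colimit.w F (homOfLE (by omega) : e ⟶ e + (j0 + 1))]
        erw [ModuleCat.comp_apply]
      rw [ofSequence_cokTrans_apply p A U hU e j0 _ rfl _ (s' • v)] at hmap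
      have hfinal : s' • Limits.colimit.ι F e (Submodule.Quotient.mk v) =
          ∑ i, f i • Limits.colimit.ι F (e + (j0 + 1))
            (Submodule.Quotient.mk (gg2 i)) := by
        calc s' • Limits.colimit.ι F e (Submodule.Quotient.mk v)
            = Limits.colimit.ι F e (Submodule.Quotient.mk (s' • v)) := by
              rw [Submodule.Quotient.mk_smul]; exact (map_smul _ _ _).symm
          _ = Limits.colimit.ι F (e + (j0 + 1))
              (Submodule.Quotient.mk
                (((Uprod p U j0).map (· ^ (p ^ e))).mulVecLin (s' • v))) := hmap
          _ = Limits.colimit.ι F (e + (j0 + 1))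
              (Submodule.Quotient.mk ((∑ i, f i • gg2 i) + bb)) := by
              rw [map_smul, hsum]
          _ = Limits.colimit.ι F (e + (j0 + 1))
              (Submodule.Quotient.mk (∑ i, f i • gg2 i)) := by
              rw [Submodule.Quotient.mk_add,
                (Submodule.Quotient.mk_eq_zero _).mpr hbb, add_zero]
          _ = ∑ i, f i • Limits.colimit.ι F (e + (j0 + 1))
              (Submodule.Quotient.mk (gg2 i)) := by
              rw [mk_sum_smul]; erw [map_sum]
              exact Finset.sum_congr rfl fun i _ => map_smul _ _ _
      rw [hfinal]
      exact Submodule.sum_mem _ fun i _ => Submodule.mem_iSup_of_mem i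
        (Submodule.smul_mem_pointwise_smul _ _ _ trivial)
  -- put everything together
  have hsupp : Module.support R
      (↥(Limits.colimit F) ⧸
        (⨆ i : Fin c, f i • (⊤ : Submodule R ↥(Limits.colimit F)))) =
      Module.support R ((Fin a → R) ⧸ K j0) := by
    ext P
    exact not_iff_not.mp (by
      rw [Module.notMem_support_iff', Module.notMem_support_iff']
      exact key P)
  constructor
  · haveI : Module.Finite R ((Fin a → R) ⧸ K j0) :=
      Module.Finite.of_surjective ((K j0).mkQ) (Submodule.Quotient.mk_surjective _)
    rw [hsupp, Module.support_eq_zeroLocus]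
    exact PrimeSpectrum.isClosed_zeroLocus _
  · refine ⟨j0, fun j hj => ?_⟩
    have hKj : K j0 = K j := hj0 j hj
    rw [hsupp]
    exact congrArg (fun S => Module.support R ((Fin a → R) ⧸ S)) hKj
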